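/- In the one-period model on Ω = (0,1], let Φ(y) = −ln(y) for 0 < y ≤ 1 and Φ(y) = y² − 3y + 2 for y > 1, so that Φ is convex on (0,∞) and Φ(0) := lim_{y↓0}Φ(y) = +∞. Let Q₁ be the probability measure with density 2·1_{(1/2,1]} with respect to P, and let Q₀ be the probability measure with density equal to c·n·e^{−n} on J_n^1 and c·e^{−n} on J_n^2, where c = (Σ_{n≥1}(n+1)e^{−n}2^{−(n+1)})^{−1}. Then: (i) Q₀ and Q₁ are separating measures; (ii) E_P[Φ(dQ₀/dP)] < +∞ while E_P[Φ(dQ₁/dP)] = +∞; (iii) nevertheless, for every x ∈ (0,1) the convex combination Q^x = (1−x)Q₀ + xQ₁ satisfies E_P[Φ(dQ^x/dP)] < +∞. In particular, when Φ(0) = +∞ a convex combination can have finite generalized entropy even though one of its components does not. -/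

import Mathlib

open MeasureTheory
open scoped ENNReal

/-- `P`: Lebesgue measure restricted to `Ω = (0,1]`. -/
noncomputable def Pmeas : Measure ℝ := MeasureTheory.volume.restrict (Set.Ioc 0 1)

/-- `I_n = (2^{-n}, 2^{-(n-1)}]` (intended for `n ≥ 1`). -/
def Iset (n : ℕ) : Set ℝ := Set.Ioc ((2 : ℝ) ^ n)⁻¹ ((2 : ℝ) ^ (n - 1))⁻¹

/-- `J_n^1 = (2^{-n}, 3·2^{-(n+1)}]`. -/
def J1 (n : ℕ) : Set ℝ := Set.Ioc ((2 : ℝ) ^ n)⁻¹ (3 * ((2 : ℝ) ^ (n + 1))⁻¹)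

/-- `J_n^2 = (3·2^{-(n+1)}, 2^{-(n-1)}]`. -/
def J2 (n : ℕ) : Set ℝ := Set.Ioc (3 * ((2 : ℝ) ^ (n + 1))⁻¹) ((2 : ℝ) ^ (n - 1))⁻¹

/-- A strategy: a function constant, equal to some `a n`, on each `I_n`. -/
def IsStrategy (α : ℝ → ℝ) : Prop :=
  ∃ a : ℕ → ℝ, ∀ n : ℕ, 1 ≤ n → ∀ ω ∈ Iset n, α ω = a n

/-- An admissible strategy: a strategy whose gain `α·X₁` is bounded below by a constant
`-c`, `P`-a.s. -/
def IsAdmissible (X₁ α : ℝ → ℝ) : Prop :=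
  IsStrategy α ∧ ∃ c : ℝ, 0 ≤ c ∧ ∀ᵐ ω ∂Pmeas, -c ≤ α ω * X₁ ω

/-- The separating measures of the one-period model: probabilities `Q ≪ P` such that
`α·X₁ ∈ L¹(Q)` and `E_Q[α·X₁] ≤ 0` for every admissible strategy `α`. -/
def SepMeasures (X₁ : ℝ → ℝ) : Set (Measure ℝ) :=
  {Q | IsProbabilityMeasure Q ∧ Q ≪ Pmeas ∧
    ∀ α : ℝ → ℝ, IsAdmissible X₁ α →
      Integrable (fun ω => α ω * X₁ ω) Q ∧ ∫ ω, α ω * X₁ ω ∂Q ≤ 0}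

/-- The convex function `Φ` of Example 21: `Φ(y) = -log y` on `(0,1]` and
`Φ(y) = y² - 3y + 2` for `y > 1`; its limit at `0⁺` is `Φ(0) = +∞`. -/
noncomputable def Phi (y : ℝ) : ℝ := if y ≤ 1 then -Real.log y else y ^ 2 - 3 * y + 2

/-- The positive part of the generalized entropy `E_P[Φ(dQ/dP)]` of a density `d`, where
`Φ(dQ/dP)` is read as `Φ(0) = +∞` on `{d = 0}`.  Since `Φ ≥ -1/4`, the generalized
entropy is finite iff this quantity is `< ⊤`, and equals `+∞` iff it is `⊤`. -/
noncomputable def entPos (d : ℝ → ℝ) : ℝ≥0∞ :=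
  ∫⁻ ω, (if d ω = 0 then ⊤ else ENNReal.ofReal (Phi (d ω))) ∂Pmeas

/-!
Write `v n` for the value of a density on `J_n^2`. The densities of `Q₀` and `Q₁` equal `n · v n`
on `J_n^1`, where `X₁ = n`, while `X₁ = -n²` on `J_n^2`; since `P(J_n^1) = P(J_n^2)`, every
strategy's gain integrates against them to zero over each `I_n`. Admissibility bounds `a_n n`
and `-a_n n²` below by some `-b`, hence `|a_n| n² v n ≤ b · sup n² v n`, which gives
integrability.

The density of `Q₁` vanishes on `(0, 1/2]`, where `Φ(0) = +∞`. The density of `Q₀` lies in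
`[c e^{-n}, c]` on `I_n`, and `n ≤ 1 - log₂ ω` there, so `Φ(dQ₀/dP) ≤ -log(dQ₀/dP) + c²` is
dominated by `C - K log ω`, which is `P`-integrable. The density of `Q^x` is at least `(1 - x)`
times that of `Q₀` and is bounded, so the same estimate applies.
-/

open Set Filter Real Topology

lemma J1_union_J2 {n : ℕ} (hn : 1 ≤ n) : J1 n ∪ J2 n = Iset n := by
  obtain ⟨m, rfl⟩ := Nat.exists_eq_add_of_le' hn
  rw [J1, J2, Iset, Ioc_union_Ioc_eq_Ioc] <;>
    simp only [Nat.add_sub_cancel, pow_succ, mul_inv] <;>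
    linarith [inv_pos.2 (pow_pos (two_pos : (0 : ℝ) < 2) m)]

lemma disjoint_J1_J2 (n : ℕ) : Disjoint (J1 n) (J2 n) := Ioc_disjoint_Ioc_of_le le_rfl

lemma J1_subset_Iset {n : ℕ} (hn : 1 ≤ n) : J1 n ⊆ Iset n :=
  J1_union_J2 hn ▸ subset_union_left

lemma J2_subset_Iset {n : ℕ} (hn : 1 ≤ n) : J2 n ⊆ Iset n :=
  J1_union_J2 hn ▸ subset_union_right

lemma Iset_subset_Ioc (n : ℕ) : Iset n ⊆ Ioc 0 1 :=
  Ioc_subset_Ioc (by positivity) (inv_le_one_of_one_le₀ (one_le_pow₀ one_le_two))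

lemma Iset_one : Iset 1 = Ioc 2⁻¹ 1 := by norm_num [Iset]

lemma measurableSet_Iset (n : ℕ) : MeasurableSet (Iset n) := measurableSet_Ioc

lemma measurableSet_J1 (n : ℕ) : MeasurableSet (J1 n) := measurableSet_Ioc

lemma measurableSet_J2 (n : ℕ) : MeasurableSet (J2 n) := measurableSet_Ioc

lemma volume_J1 (n : ℕ) : volume (J1 n) = ENNReal.ofReal (2 ^ (n + 1))⁻¹ := by
  rw [J1, Real.volume_Ioc, pow_succ, mul_inv]
  ring_nf

lemma volume_J2 {n : ℕ} (hn : 1 ≤ n) : volume (J2 n) = ENNReal.ofReal (2 ^ (n + 1))⁻¹ := by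
  obtain ⟨m, rfl⟩ := Nat.exists_eq_add_of_le' hn
  rw [J2, Real.volume_Ioc, Nat.add_sub_cancel, pow_succ, pow_succ, mul_inv, mul_inv]
  ring_nf

lemma pairwise_disjoint_Iset_succ :
    Pairwise (Function.onFun Disjoint fun m : ℕ => Iset (m + 1)) := by
  refine pairwise_disjoint_on (fun m => Iset (m + 1)) |>.2 fun i j hij => ?_
  refine (Ioc_disjoint_Ioc_of_le ?_).symm
  simp only [Nat.add_sub_cancel]
  exact inv_anti₀ (by positivity) (pow_le_pow_right₀ one_le_two hij)

lemma exists_mem_Iset {ω : ℝ} (hω : ω ∈ Ioc (0 : ℝ) 1) : ∃ n, 1 ≤ n ∧ ω ∈ Iset n := by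
  obtain ⟨m, hlt, hle⟩ := exists_nat_pow_near_of_lt_one hω.1 hω.2 (half_pos one_pos) one_half_lt_one
  refine ⟨m + 1, Nat.le_add_left 1 m, ?_, ?_⟩
  · simpa [inv_pow] using hlt
  · simpa [inv_pow] using hle

lemma iUnion_Iset_succ : ⋃ m : ℕ, Iset (m + 1) = Ioc 0 1 := by
  refine Subset.antisymm (iUnion_subset fun m => Iset_subset_Ioc _) fun ω hω => ?_
  obtain ⟨n, hn, hω⟩ := exists_mem_Iset hω
  obtain ⟨m, rfl⟩ := Nat.exists_eq_add_of_le' hn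
  exact mem_iUnion.2 ⟨m, hω⟩

lemma Pmeas_eq_restrict_iUnion : Pmeas = volume.restrict (⋃ m : ℕ, Iset (m + 1)) := by
  rw [iUnion_Iset_succ, Pmeas]

lemma ae_Pmeas_mem : ∀ᵐ ω ∂Pmeas, ω ∈ Ioc (0 : ℝ) 1 := ae_restrict_mem measurableSet_Ioc

instance : IsFiniteMeasure Pmeas := by
  rw [Pmeas]
  infer_instance

lemma sub_one_mul_log_two_le_neg_log {n : ℕ} (hn : 1 ≤ n) {ω : ℝ} (hω : ω ∈ Iset n) :
    ((n : ℝ) - 1) * log 2 ≤ -log ω := by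
  obtain ⟨m, rfl⟩ := Nat.exists_eq_add_of_le' hn
  have hω0 : 0 < ω := (Iset_subset_Ioc _ hω).1
  have := log_le_log hω0 (by simpa [Iset] using hω.2)
  rw [log_inv, log_pow] at this
  push_cast
  linarith

/-- `f` is `𝓕₁`-measurable, recorded through its values on the atoms `J_n^1` and `J_n^2`. -/
def IsCellwise {β : Type*} (f : ℝ → β) (u v : ℕ → β) : Prop :=
  ∀ n : ℕ, 1 ≤ n → (∀ ω ∈ J1 n, f ω = u n) ∧ (∀ ω ∈ J2 n, f ω = v n)

namespace IsCellwise

variable {β γ δ : Type*} {f : ℝ → β} {u v : ℕ → β}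

lemma of_Iset {w : ℕ → β} (h : ∀ n, 1 ≤ n → ∀ ω ∈ Iset n, f ω = w n) : IsCellwise f w w :=
  fun n hn => ⟨fun ω hω => h n hn ω (J1_subset_Iset hn hω),
    fun ω hω => h n hn ω (J2_subset_Iset hn hω)⟩

lemma congr {u' v' : ℕ → β} (hf : IsCellwise f u v) (hu : ∀ n, 1 ≤ n → u n = u' n)
    (hv : ∀ n, 1 ≤ n → v n = v' n) : IsCellwise f u' v' :=
  fun n hn => ⟨fun ω hω => ((hf n hn).1 ω hω).trans (hu n hn),
    fun ω hω => ((hf n hn).2 ω hω).trans (hv n hn)⟩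

lemma map (φ : β → γ) (hf : IsCellwise f u v) :
    IsCellwise (fun ω => φ (f ω)) (fun n => φ (u n)) (fun n => φ (v n)) :=
  fun n hn => ⟨fun ω hω => congrArg φ ((hf n hn).1 ω hω),
    fun ω hω => congrArg φ ((hf n hn).2 ω hω)⟩

lemma map₂ {g : ℝ → γ} {u' v' : ℕ → γ} (φ : β → γ → δ) (hf : IsCellwise f u v)
    (hg : IsCellwise g u' v') :
    IsCellwise (fun ω => φ (f ω) (g ω)) (fun n => φ (u n) (u' n)) (fun n => φ (v n) (v' n)) :=
  fun n hn => ⟨fun ω hω => congrArg₂ φ ((hf n hn).1 ω hω) ((hg n hn).1 ω hω),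
    fun ω hω => congrArg₂ φ ((hf n hn).2 ω hω) ((hg n hn).2 ω hω)⟩

lemma eq_or_eq_of_mem_Iset (hf : IsCellwise f u v) {n : ℕ} (hn : 1 ≤ n) {ω : ℝ}
    (hω : ω ∈ Iset n) : f ω = u n ∨ f ω = v n := by
  rw [← J1_union_J2 hn] at hω
  exact hω.imp ((hf n hn).1 ω) ((hf n hn).2 ω)

lemma ae_eq_or_eq (hf : IsCellwise f u v) :
    ∀ᵐ ω ∂Pmeas, ∃ n, 1 ≤ n ∧ (f ω = u n ∨ f ω = v n) := by
  filter_upwards [ae_Pmeas_mem] with ω hω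
  obtain ⟨n, hn, hωn⟩ := exists_mem_Iset hω
  exact ⟨n, hn, hf.eq_or_eq_of_mem_Iset hn hωn⟩

lemma aemeasurable [MeasurableSpace β] (hf : IsCellwise f u v) : AEMeasurable f Pmeas := by
  rw [Pmeas_eq_restrict_iUnion, aemeasurable_iUnion_iff]
  intro m
  rw [← J1_union_J2 (Nat.le_add_left 1 m), aemeasurable_union_iff]
  exact ⟨aemeasurable_const.congr ((ae_restrict_iff' (measurableSet_J1 _)).2
      (.of_forall fun ω hω => ((hf _ (Nat.le_add_left 1 m)).1 ω hω).symm)),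
    aemeasurable_const.congr ((ae_restrict_iff' (measurableSet_J2 _)).2
      (.of_forall fun ω hω => ((hf _ (Nat.le_add_left 1 m)).2 ω hω).symm))⟩

lemma lintegral_eq {f : ℝ → ℝ≥0∞} {u v : ℕ → ℝ≥0∞} (hf : IsCellwise f u v) :
    ∫⁻ ω, f ω ∂Pmeas = ∑' m : ℕ, (u (m + 1) + v (m + 1)) * ENNReal.ofReal (2 ^ (m + 2))⁻¹ := by
  rw [Pmeas_eq_restrict_iUnion,
    lintegral_iUnion (fun m => measurableSet_Iset (m + 1)) pairwise_disjoint_Iset_succ]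
  refine tsum_congr fun m => ?_
  have hm : 1 ≤ m + 1 := Nat.le_add_left 1 m
  rw [← J1_union_J2 hm, lintegral_union (measurableSet_J2 _) (disjoint_J1_J2 _),
    setLIntegral_congr_fun (measurableSet_J1 _) (hf _ hm).1,
    setLIntegral_congr_fun (measurableSet_J2 _) (hf _ hm).2,
    setLIntegral_const, setLIntegral_const, volume_J1, volume_J2 hm, add_mul]

lemma integrable {f : ℝ → ℝ} {u v : ℕ → ℝ} {B : ℝ} (hf : IsCellwise f u v)
    (hu : ∀ n, 1 ≤ n → |u n| ≤ B) (hv : ∀ n, 1 ≤ n → |v n| ≤ B) : Integrable f Pmeas := by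
  refine .of_bound (C := B) hf.aemeasurable.aestronglyMeasurable ?_
  filter_upwards [hf.ae_eq_or_eq] with ω ⟨n, hn, hω⟩
  rcases hω with hω | hω <;> rw [hω, Real.norm_eq_abs]
  exacts [hu n hn, hv n hn]

lemma integral_eq {f : ℝ → ℝ} {u v : ℕ → ℝ} (hf : IsCellwise f u v) (hint : Integrable f Pmeas) :
    ∫ ω, f ω ∂Pmeas = ∑' m : ℕ, (u (m + 1) + v (m + 1)) * (2 ^ (m + 2))⁻¹ := by
  have hU : IntegrableOn f (⋃ m : ℕ, Iset (m + 1)) := by rwa [Pmeas_eq_restrict_iUnion] at hint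
  rw [Pmeas_eq_restrict_iUnion,
    integral_iUnion (fun m => measurableSet_Iset (m + 1)) pairwise_disjoint_Iset_succ hU]
  refine tsum_congr fun m => ?_
  have hm : 1 ≤ m + 1 := Nat.le_add_left 1 m
  have hint_m := hU.mono_set (subset_iUnion _ m)
  rw [← J1_union_J2 hm] at hint_m ⊢
  rw [setIntegral_union (disjoint_J1_J2 _) (measurableSet_J2 _)
      (hint_m.mono_set subset_union_left) (hint_m.mono_set subset_union_right),
    setIntegral_congr_fun (measurableSet_J1 _) (hf _ hm).1,
    setIntegral_congr_fun (measurableSet_J2 _) (hf _ hm).2, setIntegral_const, setIntegral_const,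
    measureReal_def, measureReal_def, volume_J1, volume_J2 hm,
    ENNReal.toReal_ofReal (by positivity), smul_eq_mul, smul_eq_mul, pow_succ _ (m + 1)]
  ring

lemma le_of_ae_le [Preorder β] {b : β} (hf : IsCellwise f u v) (h : ∀ᵐ ω ∂Pmeas, b ≤ f ω)
    {n : ℕ} (hn : 1 ≤ n) : b ≤ u n ∧ b ≤ v n := by
  have key : ∀ s ⊆ Iset n, volume s ≠ 0 → ∀ w, (∀ ω ∈ s, f ω = w) → b ≤ w := by
    intro s hs hs0 w hw
    by_contra hbw
    have hPs : Pmeas s = volume s := Measure.restrict_eq_self _ (hs.trans (Iset_subset_Ioc n))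
    exact hs0 (hPs ▸ measure_mono_null (fun ω hω hbf => hbw (hw ω hω ▸ hbf)) (ae_iff.1 h))
  exact ⟨key _ (J1_subset_Iset hn) (by simp [volume_J1]) _ (hf n hn).1,
    key _ (J2_subset_Iset hn) (by simp [volume_J2 hn]) _ (hf n hn).2⟩

end IsCellwise

lemma abs_mul_sq_mul_le {a n v c B : ℝ} (hn : 1 ≤ n) (hv : 0 ≤ v) (hB : n ^ 2 * v ≤ B)
    (h₁ : -c ≤ a * n) (h₂ : -c ≤ a * -n ^ 2) : |a * n ^ 2 * v| ≤ c * B := by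
  have hc : 0 ≤ c := by nlinarith
  have hnB : n * v ≤ B := (mul_le_mul_of_nonneg_right (by nlinarith) hv).trans hB
  have hvB : v ≤ B := (le_mul_of_one_le_left hv (by nlinarith)).trans hB
  rw [abs_le]
  constructor
  · nlinarith [mul_le_mul_of_nonneg_right h₁ (by positivity : 0 ≤ n * v),
      mul_le_mul_of_nonneg_left hnB hc]
  · nlinarith [mul_le_mul_of_nonneg_right (by linarith : a * n ^ 2 ≤ c) hv,
      mul_le_mul_of_nonneg_left hvB hc]

lemma isProbabilityMeasure_withDensity {d : ℝ → ℝ} {v : ℕ → ℝ}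
    (hd : IsCellwise d (fun n => n * v n) v) (hv : ∀ n, 0 ≤ v n)
    (hsum : HasSum (fun m : ℕ => ((m : ℝ) + 2) * v (m + 1) * (2 ^ (m + 2))⁻¹) 1) :
    IsProbabilityMeasure (Pmeas.withDensity fun ω => ENNReal.ofReal (d ω)) := by
  constructor
  rw [withDensity_apply _ MeasurableSet.univ, Measure.restrict_univ,
    (hd.map ENNReal.ofReal).lintegral_eq, ← ENNReal.ofReal_one, ← hsum.tsum_eq,
    ENNReal.ofReal_tsum_of_nonneg (fun m => by have := hv (m + 1); positivity) hsum.summable]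
  refine tsum_congr fun m => ?_
  have := hv (m + 1)
  rw [← ENNReal.ofReal_add (by positivity) this, ← ENNReal.ofReal_mul (by positivity)]
  push_cast
  ring_nf

theorem withDensity_mem_SepMeasures {X₁ d : ℝ → ℝ} {v : ℕ → ℝ} {B : ℝ}
    (hX₁ : IsCellwise X₁ (fun n => (n : ℝ)) (fun n => -((n : ℝ) ^ 2)))
    (hd : IsCellwise d (fun n => n * v n) v) (hv : ∀ n, 0 ≤ v n)
    (hB : ∀ n : ℕ, 1 ≤ n → (n : ℝ) ^ 2 * v n ≤ B)
    (hsum : HasSum (fun m : ℕ => ((m : ℝ) + 2) * v (m + 1) * (2 ^ (m + 2))⁻¹) 1) :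
    Pmeas.withDensity (fun ω => ENNReal.ofReal (d ω)) ∈ SepMeasures X₁ := by
  refine ⟨isProbabilityMeasure_withDensity hd hv hsum, withDensity_absolutelyContinuous _ _,
    fun α hα => ?_⟩
  obtain ⟨⟨a, ha⟩, c, -, hae⟩ := hα
  have hgain := (IsCellwise.of_Iset ha).map₂ (· * ·) hX₁
  have hbound : ∀ n, 1 ≤ n → |a n * (n : ℝ) ^ 2 * v n| ≤ c * B := fun n hn =>
    abs_mul_sq_mul_le (by exact_mod_cast hn) (hv n) (hB n hn) (hgain.le_of_ae_le hae hn).1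
      (hgain.le_of_ae_le hae hn).2
  have hF : IsCellwise (fun ω => (d ω).toNNReal • (α ω * X₁ ω))
      (fun n => a n * (n : ℝ) ^ 2 * v n) (fun n => -(a n * (n : ℝ) ^ 2 * v n)) := by
    refine (hd.map₂ (fun r s => r.toNNReal • s) hgain).congr (fun n _ => ?_) (fun n _ => ?_) <;>
      simp only [NNReal.smul_def, smul_eq_mul, Real.coe_toNNReal', max_eq_left (hv n),
        max_eq_left (mul_nonneg n.cast_nonneg (hv n))] <;> ring
  have hdm : AEMeasurable (fun ω => (d ω).toNNReal) Pmeas := (hd.map Real.toNNReal).aemeasurable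
  have hint : Integrable (fun ω => (d ω).toNNReal • (α ω * X₁ ω)) Pmeas :=
    hF.integrable hbound fun n hn => (abs_neg _).trans_le (hbound n hn)
  refine ⟨(integrable_withDensity_iff_integrable_smul₀ hdm).2 hint, ?_⟩
  refine (integral_withDensity_eq_integral_smul₀ hdm _).trans_le ?_
  rw [hF.integral_eq hint]
  simp

lemma Phi_eqOn_Iic : EqOn Phi (fun y => -log y) (Iic 1) := fun _ hy => if_pos hy

lemma Phi_eqOn_Ici : EqOn Phi (fun y => y ^ 2 - 3 * y + 2) (Ici 1) := fun y hy => by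
  rcases (mem_Ici.1 hy).eq_or_lt with rfl | h
  · norm_num [Phi]
  · exact if_neg h.not_ge

lemma hasDerivAt_Phi {y : ℝ} (hy : 0 < y) :
    HasDerivAt Phi (if y ≤ 1 then -y⁻¹ else 2 * y - 3) y := by
  have hlog : HasDerivAt (fun z => -log z) (-y⁻¹) y := (hasDerivAt_log hy.ne').neg
  have hpoly : HasDerivAt (fun z => z ^ 2 - 3 * z + 2) (2 * y - 3) y := by
    simpa using ((hasDerivAt_pow 2 y).sub ((hasDerivAt_id y).const_mul 3)).add_const 2
  rcases lt_trichotomy y 1 with h | rfl | h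
  · rw [if_pos h.le]
    exact hlog.congr_of_eventuallyEq (Phi_eqOn_Iic.eventuallyEq_of_mem (Iic_mem_nhds h))
  · -- both pieces vanish at `1` with slope `-1`, so the one-sided derivatives agree
    rw [if_pos le_rfl]
    have h := (hlog.hasDerivWithinAt.congr Phi_eqOn_Iic (Phi_eqOn_Iic self_mem_Iic)).union
      ((hpoly.congr_deriv (by norm_num)).hasDerivWithinAt.congr Phi_eqOn_Ici
        (Phi_eqOn_Ici self_mem_Ici))
    rwa [Iic_union_Ici, hasDerivWithinAt_univ] at h
  · rw [if_neg h.not_ge]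
    exact hpoly.congr_of_eventuallyEq (Phi_eqOn_Ici.eventuallyEq_of_mem (Ici_mem_nhds h))

lemma convexOn_Phi : ConvexOn ℝ (Ioi 0) Phi := by
  refine MonotoneOn.convexOn_of_deriv (convex_Ioi 0)
    (fun y hy => (hasDerivAt_Phi hy).continuousAt.continuousWithinAt) ?_ ?_ <;>
    rw [interior_Ioi]
  · exact fun y hy => (hasDerivAt_Phi hy).differentiableAt.differentiableWithinAt
  · intro x hx y hy hxy
    rw [(hasDerivAt_Phi hx).deriv, (hasDerivAt_Phi hy).deriv]
    split_ifs with hx1 hy1 hy1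
    · exact neg_le_neg (inv_anti₀ hx hxy)
    · linarith [one_le_inv₀ hx |>.2 hx1]
    · linarith
    · linarith

lemma tendsto_Phi_nhdsGT_zero : Tendsto Phi (𝓝[>] 0) atTop :=
  (tendsto_neg_atBot_atTop.comp tendsto_log_nhdsGT_zero).congr'
    (Phi_eqOn_Iic.eventuallyEq_of_mem (mem_of_superset (Ioo_mem_nhdsGT one_pos)
      (Ioo_subset_Ioc_self.trans Ioc_subset_Iic_self))).symm

lemma Phi_le_neg_log_add_sq {y : ℝ} (hy : 0 < y) : Phi y ≤ -log y + y ^ 2 := by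
  rw [Phi]
  split_ifs
  · nlinarith
  · nlinarith [log_le_sub_one_of_pos hy]

lemma integrable_neg_log_Pmeas : Integrable (fun ω => -log ω) Pmeas :=
  ((intervalIntegrable_iff_integrableOn_Ioc_of_le zero_le_one).1
    intervalIntegral.intervalIntegrable_log').neg

lemma entPos_lt_top_of_bounds {d : ℝ → ℝ} {a M : ℝ} (ha : 0 < a)
    (hd : ∀ n : ℕ, 1 ≤ n → ∀ ω ∈ Iset n, d ω ∈ Icc (a * exp (-n)) M) : entPos d < ⊤ := by
  set C := 1 - log a + M ^ 2
  have hlog2 : 0 < log 2 := log_pos one_lt_two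
  have key : ∀ ω ∈ Ioc (0 : ℝ) 1, d ω ≠ 0 ∧ Phi (d ω) ≤ C + (log 2)⁻¹ * -log ω := by
    intro ω hω
    obtain ⟨n, hn, hωn⟩ := exists_mem_Iset hω
    obtain ⟨hlo, hhi⟩ := hd n hn ω hωn
    have hpos : 0 < d ω := lt_of_lt_of_le (by positivity) hlo
    have hlog_d : -log (d ω) ≤ n - log a := by
      have := log_le_log (by positivity) hlo
      rw [log_mul ha.ne' (exp_pos _).ne', log_exp] at this
      linarith
    have hn_le : (n : ℝ) ≤ 1 + (log 2)⁻¹ * -log ω := by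
      have := sub_one_mul_log_two_le_neg_log hn hωn
      rw [← le_div_iff₀ hlog2] at this
      rw [inv_mul_eq_div]
      linarith
    refine ⟨hpos.ne', (Phi_le_neg_log_add_sq hpos).trans ?_⟩
    nlinarith [pow_le_pow_left₀ hpos.le hhi 2]
  calc entPos d ≤ ∫⁻ ω, ENNReal.ofReal (C + (log 2)⁻¹ * -log ω) ∂Pmeas := by
        refine lintegral_mono_ae (ae_Pmeas_mem.mono fun ω hω => ?_)
        rw [if_neg (key ω hω).1]
        exact ENNReal.ofReal_le_ofReal (key ω hω).2
    _ < ⊤ := ((integrable_const C).add (integrable_neg_log_Pmeas.const_mul _)).lintegral_lt_top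

lemma entPos_eq_top_of_eqOn_zero {d : ℝ → ℝ} {s : Set ℝ} (hs : MeasurableSet s)
    (hPs : Pmeas s ≠ 0) (hd : ∀ ω ∈ s, d ω = 0) : entPos d = ⊤ := by
  refine eq_top_iff.2 ((setLIntegral_le_lintegral s _).trans' ?_)
  rw [setLIntegral_congr_fun hs fun ω hω => if_pos (hd ω hω), setLIntegral_const,
    ENNReal.top_mul hPs]

lemma pow_mul_exp_neg_le_factorial {x : ℝ} (hx : 0 ≤ x) (k : ℕ) :
    x ^ k * exp (-x) ≤ k.factorial := by
  rw [exp_neg, ← div_eq_mul_inv, div_le_iff₀ (exp_pos x), ← div_le_iff₀' (by positivity)]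
  exact pow_div_factorial_le_exp x hx k

lemma summable_add_two_mul_exp_neg_mul_inv_two_pow :
    Summable fun n : ℕ => ((n : ℝ) + 2) * exp (-((n : ℝ) + 1)) * (2 ^ (n + 2))⁻¹ := by
  refine .of_nonneg_of_le (fun n => by positivity) (fun n => ?_)
    ((summable_pow_mul_exp_neg_nat_mul 1 one_pos).add
      ((summable_pow_mul_exp_neg_nat_mul 0 one_pos).mul_left 2))
  calc ((n : ℝ) + 2) * exp (-((n : ℝ) + 1)) * (2 ^ (n + 2))⁻¹
      ≤ ((n : ℝ) + 2) * exp (-n) * 1 := by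
        gcongr
        · linarith
        · exact inv_le_one_of_one_le₀ (one_le_pow₀ one_le_two)
    _ = _ := by ring_nf

lemma tsum_add_two_mul_exp_neg_mul_inv_two_pow_pos :
    0 < ∑' n : ℕ, ((n : ℝ) + 2) * exp (-((n : ℝ) + 1)) * (2 ^ (n + 2))⁻¹ :=
  summable_add_two_mul_exp_neg_mul_inv_two_pow.tsum_pos (fun n => by positivity) 0
    (by positivity)

lemma mem_Icc_of_isCellwise_exp {d : ℝ → ℝ} {c : ℝ}
    (hd : IsCellwise d (fun n => c * n * exp (-n)) (fun n => c * exp (-n))) (hc : 0 ≤ c) :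
    ∀ n : ℕ, 1 ≤ n → ∀ ω ∈ Iset n, d ω ∈ Icc (c * exp (-n)) c := by
  intro n hn ω hω
  have hn1 : (1 : ℝ) ≤ n := by exact_mod_cast hn
  have hexp1 : exp (-n) ≤ 1 := exp_le_one_iff.2 (by linarith)
  have hnexp : n * exp (-n) ≤ 1 := by simpa using pow_mul_exp_neg_le_factorial n.cast_nonneg 1
  rcases hd.eq_or_eq_of_mem_Iset hn hω with h | h <;> rw [h]
  · constructor <;> nlinarith [mul_le_mul_of_nonneg_left hn1 (mul_nonneg hc (exp_pos (-n)).le)]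
  · constructor <;> nlinarith

lemma withDensity_mem_SepMeasures_of_isCellwise_exp {X₁ d : ℝ → ℝ} {c : ℝ}
    (hd : IsCellwise d (fun n => c * n * exp (-n)) (fun n => c * exp (-n)))
    (hX₁ : IsCellwise X₁ (fun n => (n : ℝ)) (fun n => -((n : ℝ) ^ 2)))
    (hc : c = (∑' n : ℕ, ((n : ℝ) + 2) * exp (-((n : ℝ) + 1)) * (2 ^ (n + 2))⁻¹)⁻¹) :
    Pmeas.withDensity (fun ω => ENNReal.ofReal (d ω)) ∈ SepMeasures X₁ := by
  have hc0 : 0 < c := hc ▸ inv_pos.2 tsum_add_two_mul_exp_neg_mul_inv_two_pow_pos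
  refine withDensity_mem_SepMeasures (B := 2 * c) hX₁
    (hd.congr (fun n _ => by ring) fun _ _ => rfl) (fun n => by positivity) (fun n _ => ?_) ?_
  · have := pow_mul_exp_neg_le_factorial n.cast_nonneg 2
    norm_num at this
    nlinarith
  · have h := summable_add_two_mul_exp_neg_mul_inv_two_pow.hasSum.mul_left c
    rw [hc, inv_mul_cancel₀ tsum_add_two_mul_exp_neg_mul_inv_two_pow_pos.ne', ← hc] at h
    refine h.congr_fun fun m => ?_
    push_cast
    ring

lemma isCellwise_ite_Ioc :
    IsCellwise (fun ω => if ω ∈ Ioc (2⁻¹ : ℝ) 1 then (2 : ℝ) else 0)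
      (fun n => n * if n = 1 then 2 else 0) (fun n => if n = 1 then 2 else 0) := by
  refine (IsCellwise.of_Iset fun n hn ω hω => ?_).congr (fun n _ => ?_) (fun _ _ => rfl)
  · have hmem : ω ∈ Ioc (2⁻¹ : ℝ) 1 ↔ n = 1 := by
      rw [← Iset_one]
      refine ⟨fun h1 => ?_, fun h => h ▸ hω⟩
      obtain ⟨k, rfl⟩ := Nat.exists_eq_add_of_le' hn
      by_contra hk
      exact disjoint_left.1 (pairwise_disjoint_Iset_succ (by omega : k ≠ 0)) hω h1
    simp only [hmem]
  · split_ifs with h <;> simp [h]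

lemma withDensity_ite_Ioc_mem_SepMeasures {X₁ : ℝ → ℝ}
    (hX₁ : IsCellwise X₁ (fun n => (n : ℝ)) (fun n => -((n : ℝ) ^ 2))) :
    Pmeas.withDensity (fun ω => ENNReal.ofReal (if ω ∈ Ioc (2⁻¹ : ℝ) 1 then 2 else 0)) ∈
      SepMeasures X₁ := by
  refine withDensity_mem_SepMeasures (B := 2) hX₁ isCellwise_ite_Ioc
    (fun n => by positivity) (fun n _ => ?_) ?_
  · split_ifs with h <;> simp [h]
  · convert hasSum_single 0 fun m hm => ?_ using 1
    · norm_num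
    · simp [hm]

lemma entPos_ite_Ioc_eq_top :
    entPos (fun ω => if ω ∈ Ioc (2⁻¹ : ℝ) 1 then 2 else 0) = ⊤ := by
  refine entPos_eq_top_of_eqOn_zero (s := Ioc 0 2⁻¹) measurableSet_Ioc ?_
    fun ω hω => if_neg fun h => (h.1.trans_le hω.2).false
  rw [Pmeas, Measure.restrict_eq_self _ (Ioc_subset_Ioc_right (by norm_num))]
  simp

theorem example21_entropy_convex_combination_general
    (X₁ : ℝ → ℝ)
    (hX₁ : ∀ n : ℕ, 1 ≤ n →
      (∀ ω ∈ J1 n, X₁ ω = (n : ℝ)) ∧ (∀ ω ∈ J2 n, X₁ ω = -((n : ℝ) ^ 2)))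
    (c : ℝ)
    (hc : c = (∑' n : ℕ, ((n : ℝ) + 2) * Real.exp (-((n : ℝ) + 1)) *
      (((2 : ℝ) ^ (n + 2))⁻¹))⁻¹)
    (d₀ : ℝ → ℝ)
    (hd₀ : ∀ n : ℕ, 1 ≤ n →
      (∀ ω ∈ J1 n, d₀ ω = c * (n : ℝ) * Real.exp (-(n : ℝ))) ∧
      (∀ ω ∈ J2 n, d₀ ω = c * Real.exp (-(n : ℝ))))
    (d₁ : ℝ → ℝ) (hd₁ : d₁ = fun ω => if ω ∈ Set.Ioc (2⁻¹ : ℝ) 1 then 2 else 0)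
    (Q₀ Q₁ : Measure ℝ)
    (hQ₀ : Q₀ = Pmeas.withDensity (fun ω => ENNReal.ofReal (d₀ ω)))
    (hQ₁ : Q₁ = Pmeas.withDensity (fun ω => ENNReal.ofReal (d₁ ω))) :
    ConvexOn ℝ (Set.Ioi 0) Phi ∧
    Filter.Tendsto Phi (nhdsWithin 0 (Set.Ioi 0)) Filter.atTop ∧
    Q₀ ∈ SepMeasures X₁ ∧ Q₁ ∈ SepMeasures X₁ ∧
    entPos d₀ < ⊤ ∧ entPos d₁ = ⊤ ∧
    ∀ x : ℝ, x ∈ Set.Ioo (0 : ℝ) 1 →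
      entPos (fun ω => (1 - x) * d₀ ω + x * d₁ ω) < ⊤ := by
  subst hQ₀ hQ₁ hd₁
  have hc0 : 0 < c := hc ▸ inv_pos.2 tsum_add_two_mul_exp_neg_mul_inv_two_pow_pos
  have hd₀_bounds := mem_Icc_of_isCellwise_exp hd₀ hc0.le
  refine ⟨convexOn_Phi, tendsto_Phi_nhdsGT_zero,
    withDensity_mem_SepMeasures_of_isCellwise_exp hd₀ hX₁ hc,
    withDensity_ite_Ioc_mem_SepMeasures hX₁, entPos_lt_top_of_bounds hc0 hd₀_bounds,
    entPos_ite_Ioc_eq_top, fun x ⟨hx0, hx1⟩ => ?_⟩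
  refine entPos_lt_top_of_bounds (a := (1 - x) * c) (M := c + 2) (by nlinarith)
    fun n hn ω hω => ?_
  obtain ⟨h₀lo, h₀hi⟩ := hd₀_bounds n hn ω hω
  have h₁ : 0 ≤ (if ω ∈ Ioc (2⁻¹ : ℝ) 1 then (2 : ℝ) else 0) ∧
      (if ω ∈ Ioc (2⁻¹ : ℝ) 1 then (2 : ℝ) else 0) ≤ 2 := by
    split_ifs <;> norm_num
  constructor <;> nlinarith [exp_pos (-(n : ℝ))]

/-- Example 21 of Biagini–Frittelli: with `Φ` convex on `(0,∞)` and `Φ(0) = +∞`, the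
separating measure `Q₁` with bounded density `2·1_{(1/2,1]}` has infinite generalized
entropy, the separating measure `Q₀` with density `c·n·e^{-n}` on `J_n^1` and `c·e^{-n}`
on `J_n^2` has finite generalized entropy, and nevertheless every convex combination
`Q^x = (1-x)Q₀ + xQ₁`, `x ∈ (0,1)`, has finite generalized entropy. -/
theorem example21_entropy_convex_combination
    (X₁ : ℝ → ℝ)
    (hX₁ : ∀ n : ℕ, 1 ≤ n →
      (∀ ω ∈ J1 n, X₁ ω = (n : ℝ)) ∧ (∀ ω ∈ J2 n, X₁ ω = -((n : ℝ) ^ 2)))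
    (c : ℝ)
    (hc : c = (∑' n : ℕ, ((n : ℝ) + 2) * Real.exp (-((n : ℝ) + 1)) *
      (((2 : ℝ) ^ (n + 2))⁻¹))⁻¹)
    (d₀ : ℝ → ℝ) (hd₀m : Measurable d₀)
    (hd₀ : ∀ n : ℕ, 1 ≤ n →
      (∀ ω ∈ J1 n, d₀ ω = c * (n : ℝ) * Real.exp (-(n : ℝ))) ∧
      (∀ ω ∈ J2 n, d₀ ω = c * Real.exp (-(n : ℝ))))
    (d₁ : ℝ → ℝ) (hd₁ : d₁ = fun ω => if ω ∈ Set.Ioc (2⁻¹ : ℝ) 1 then 2 else 0)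
    (Q₀ Q₁ : Measure ℝ)
    (hQ₀ : Q₀ = Pmeas.withDensity (fun ω => ENNReal.ofReal (d₀ ω)))
    (hQ₁ : Q₁ = Pmeas.withDensity (fun ω => ENNReal.ofReal (d₁ ω))) :
    ConvexOn ℝ (Set.Ioi 0) Phi ∧
    Filter.Tendsto Phi (nhdsWithin 0 (Set.Ioi 0)) Filter.atTop ∧
    Q₀ ∈ SepMeasures X₁ ∧ Q₁ ∈ SepMeasures X₁ ∧
    entPos d₀ < ⊤ ∧ entPos d₁ = ⊤ ∧
    ∀ x : ℝ, x ∈ Set.Ioo (0 : ℝ) 1 →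
      entPos (fun ω => (1 - x) * d₀ ω + x * d₁ ω) < ⊤ :=
  example21_entropy_convex_combination_general X₁ hX₁ c hc d₀ hd₀ d₁ hd₁ Q₀ Q₁ hQ₀ hQ₁
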